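/- Let F = {e^{iθ} : θ₀ < θ < π − θ₀} with θ₀ ∈ (−π/2, π/2), and let α = 1/2 + θ₀/π. Then the level set L_F(α) = {z ∈ D : χ̂_F(z) = α} is the open chord (segment) joining −e^{−iθ₀} and e^{iθ₀}, and for every z on this segment one has (e^{iθ₀} − z)(e^{−iθ₀} + z) = 1 − |z|². -/

import Mathlib

/-!
For `‖z‖ < 1` the real part of the Poisson kernel `(e^{iθ} + z) / (e^{iθ} - z)` is the
derivative of `θ + 2 arg (1 - z e^{-iθ})`; the argument stays in the right half-plane, so no
branch cut is crossed. Integrating over the arc and absorbing the rotations by `e^{±iθ₀}` gives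
`χ̂_F(z) = α + (arg (z + e^{-iθ₀}) - arg (e^{iθ₀} - z)) / π`. Hence `χ̂_F(z) = α` exactly when
`z - (-e^{-iθ₀})` and `e^{iθ₀} - z` point in the same direction, i.e. when `z` lies on the chord.
-/

open Complex Metric Real

open scoped ComplexConjugate

/-- The Poisson integral of the characteristic function of the arc
`F = {e^{iθ} : θ₀ < θ < π − θ₀}`. -/
noncomputable def poissonArc (θ₀ : ℝ) (z : ℂ) : ℝ :=
  (∫ θ in θ₀..(Real.pi - θ₀), ((Complex.exp (θ * Complex.I) + z) /
      (Complex.exp (θ * Complex.I) - z)).re) / (2 * Real.pi)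

lemma re_one_sub_pos {w : ℂ} (hw : ‖w‖ < 1) : 0 < (1 - w).re := by
  rw [sub_re, one_re]
  linarith [re_le_norm w]

lemma exp_ofReal_mul_I_sub_ne_zero {z : ℂ} (hz : ‖z‖ < 1) (θ : ℝ) : exp (θ * I) - z ≠ 0 := by
  rw [sub_ne_zero]
  rintro rfl
  simp at hz

lemma arg_exp_ofReal_mul_I_mul {θ : ℝ} (hθ : |θ| < π / 2) {w : ℂ} (hw : 0 < w.re) :
    arg (exp (θ * I) * w) = θ + arg w := by
  have hθ' := abs_lt.mp hθ
  have hw' := abs_lt.mp (abs_arg_lt_pi_div_two_iff.mpr (Or.inl hw))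
  have harg : arg (exp (θ * I)) = θ := by
    rw [exp_mul_I, arg_cos_add_sin_mul_I ⟨by linarith, by linarith⟩]
  rw [arg_mul (exp_ne_zero _) (fun h => by simp [h] at hw), harg]
  exact ⟨by linarith, by linarith⟩

lemma hasDerivAt_poissonKernel_primitive {z : ℂ} (hz : ‖z‖ < 1) (θ : ℝ) :
    HasDerivAt (fun t : ℝ => t + 2 * arg (1 - z * exp (-t * I)))
      ((exp (θ * I) + z) / (exp (θ * I) - z)).re θ := by
  have hslit : 1 - z * exp (-θ * I) ∈ slitPlane := by
    rw [sub_eq_add_neg]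
    refine mem_slitPlane_of_norm_lt_one ?_
    rw [norm_neg, norm_mul, norm_exp]
    simpa using hz
  have hlin : HasDerivAt (fun t : ℝ => -(t : ℂ) * I) (-I) θ := by
    simpa using (ofRealCLM.hasDerivAt (x := θ)).neg.mul_const I
  have hf := (hlin.cexp.const_mul z).const_sub 1
  have him := (imCLM.hasFDerivAt.comp_hasDerivAt θ (hf.clog_real hslit)).const_mul 2
  simp only [← log_im]
  refine ((hasDerivAt_id θ).add him).congr_deriv ?_
  have hne := exp_ofReal_mul_I_sub_ne_zero hz θ
  have hexp : exp (θ * I) * exp (-θ * I) = 1 := by rw [← Complex.exp_add]; simp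
  have hlogderiv : -(z * (exp (-θ * I) * -I)) / (1 - z * exp (-θ * I)) =
      I * (z / (exp (θ * I) - z)) := by
    rw [mul_div_assoc', div_eq_div_iff (slitPlane_ne_zero hslit) hne]
    linear_combination (z * I) * hexp
  have hkernel : (exp (θ * I) + z) / (exp (θ * I) - z) = 1 + 2 * (z / (exp (θ * I) - z)) := by
    field_simp
    ring
  rw [imCLM_apply, hlogderiv, I_mul_im, hkernel]
  simp

lemma integral_poissonKernel_re {z : ℂ} (hz : ‖z‖ < 1) (a b : ℝ) :
    ∫ θ in a..b, ((exp (θ * I) + z) / (exp (θ * I) - z)).re =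
      b - a + 2 * (arg (1 - z * exp (-b * I)) - arg (1 - z * exp (-a * I))) := by
  have hcont : Continuous fun θ : ℝ => ((exp (θ * I) + z) / (exp (θ * I) - z)).re :=
    continuous_re.comp <|
      Continuous.div (by fun_prop) (by fun_prop) (exp_ofReal_mul_I_sub_ne_zero hz)
  rw [intervalIntegral.integral_eq_sub_of_hasDerivAt
    (fun θ _ => hasDerivAt_poissonKernel_primitive hz θ) (hcont.intervalIntegrable a b)]
  ring

lemma poissonArc_eq_arg_sub_arg (θ₀ : ℝ) {z : ℂ} (hz : ‖z‖ < 1) :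
    poissonArc θ₀ z = (π - 2 * θ₀ +
      2 * (arg (1 + z * exp (θ₀ * I)) - arg (1 - z * exp (-θ₀ * I)))) / (2 * π) := by
  have hexp : exp (-↑(π - θ₀) * I) = -exp (θ₀ * I) := by
    rw [show -↑(π - θ₀) * I = θ₀ * I - π * I by push_cast; ring, Complex.exp_sub, exp_pi_mul_I,
      div_neg, div_one]
  rw [poissonArc, integral_poissonKernel_re hz, hexp, mul_neg, sub_neg_eq_add]
  ring

lemma poissonArc_eq_of_norm_lt_one {θ₀ : ℝ} (hθ₀ : |θ₀| < π / 2) {z : ℂ} (hz : ‖z‖ < 1) :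
    poissonArc θ₀ z =
      1 / 2 + θ₀ / π + (arg (z + exp (-θ₀ * I)) - arg (exp (θ₀ * I) - z)) / π := by
  have hexp : exp (θ₀ * I) * exp (-θ₀ * I) = 1 := by rw [← Complex.exp_add]; simp
  have hz' : ‖z * exp (θ₀ * I)‖ < 1 := by simpa using hz
  have hz'' : ‖z * exp (-θ₀ * I)‖ < 1 := by rw [norm_mul, norm_exp]; simpa using hz
  have hleft : z + exp (-θ₀ * I) = exp (↑(-θ₀) * I) * (1 - -(z * exp (θ₀ * I))) := by
    push_cast; linear_combination -z * hexp
  have hright : exp (θ₀ * I) - z = exp (θ₀ * I) * (1 - z * exp (-θ₀ * I)) := by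
    linear_combination z * hexp
  rw [hleft, hright,
    arg_exp_ofReal_mul_I_mul (by rwa [abs_neg]) (re_one_sub_pos (by simpa using hz')),
    arg_exp_ofReal_mul_I_mul hθ₀ (re_one_sub_pos hz''), poissonArc_eq_arg_sub_arg θ₀ hz,
    sub_neg_eq_add]
  field_simp
  ring

lemma mem_ball_and_arg_eq_iff_mem_openSegment {a b z : ℂ} (ha : ‖a‖ = 1) (hb : ‖b‖ = 1)
    (hab : a ≠ b) : z ∈ ball (0 : ℂ) 1 ∧ arg (z - a) = arg (b - z) ↔ z ∈ openSegment ℝ a b := by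
  have hsub : openSegment ℝ a b ⊆ ball 0 1 :=
    openSegment_subset_ball_of_ne (by simp [ha]) (by simp [hb]) hab
  have hne {w : ℂ} (hw : ‖w‖ = 1) (hz : z ∈ ball (0 : ℂ) 1) : w ≠ z := by
    rintro rfl
    simp [hw] at hz
  refine ⟨fun ⟨hz, harg⟩ => ?_, fun hz => ⟨hsub hz, ?_⟩⟩
  · refine mem_openSegment_of_ne_left_right (hne ha hz) (hne hb hz) ?_
    exact mem_segment_iff_sameRay.mpr (sameRay_iff.mpr (Or.inr (Or.inr harg)))
  · have hray :=
      sameRay_iff.mp (mem_segment_iff_sameRay.mp (openSegment_subset_segment ℝ a b hz))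
    rw [sub_eq_zero, sub_eq_zero] at hray
    exact (hray.resolve_left (hne ha (hsub hz)).symm).resolve_left (hne hb (hsub hz))

lemma sub_mul_conj_add_eq_one_sub_norm_sq {u z : ℂ} (hu : ‖u‖ = 1)
    (hz : z ∈ segment ℝ (-conj u) u) :
    (u - z) * (conj u + z) = ((1 - ‖z‖ ^ 2 : ℝ) : ℂ) := by
  obtain ⟨s, t, -, -, hst, rfl⟩ := hz
  obtain rfl : t = 1 - s := by linarith
  have huu : u * conj u = 1 := by simp [mul_conj', hu]
  have hconj : conj (s • -conj u + (1 - s) • u) = -s * u + (1 - s) * conj u := by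
    simp [real_smul]
  push_cast
  rw [← mul_conj', hconj, real_smul, real_smul]
  push_cast
  linear_combination huu

/-- For `F = {e^{iθ} : θ₀ < θ < π − θ₀}` with `θ₀ ∈ (−π/2, π/2)` and
`α = 1/2 + θ₀/π`, the level set `L_F(α) = {z ∈ D : χ̂_F(z) = α}` is the open segment
joining `−e^{−iθ₀}` and `e^{iθ₀}`, and on this segment
`(e^{iθ₀} − z)(e^{−iθ₀} + z) = 1 − |z|²`. -/
theorem levelSet_poissonArc (θ₀ : ℝ) (hθ₀ : θ₀ ∈ Set.Ioo (-(Real.pi / 2)) (Real.pi / 2))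
    (α : ℝ) (hα : α = 1 / 2 + θ₀ / Real.pi) :
    {z : ℂ | z ∈ ball (0 : ℂ) 1 ∧ poissonArc θ₀ z = α} =
        openSegment ℝ (-Complex.exp (-θ₀ * Complex.I)) (Complex.exp (θ₀ * Complex.I)) ∧
      ∀ z ∈ openSegment ℝ (-Complex.exp (-θ₀ * Complex.I)) (Complex.exp (θ₀ * Complex.I)),
        (Complex.exp (θ₀ * Complex.I) - z) * (Complex.exp (-θ₀ * Complex.I) + z) =
          ((1 : ℝ) - ‖z‖ ^ 2 : ℝ) := by
  set u := exp (θ₀ * I)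
  have hconj : exp (-θ₀ * I) = conj u := by rw [← exp_conj]; simp
  have hu : ‖u‖ = 1 := norm_exp_ofReal_mul_I θ₀
  have hne : -conj u ≠ u := fun h => by
    have hre := congrArg re h
    simp only [neg_re, conj_re, u, exp_ofReal_mul_I_re] at hre
    linarith [cos_pos_of_mem_Ioo hθ₀]
  rw [hconj]
  refine ⟨?_, fun z hz =>
    sub_mul_conj_add_eq_one_sub_norm_sq hu (openSegment_subset_segment ℝ _ _ hz)⟩
  ext z
  rw [Set.mem_ofPred_eq, ← mem_ball_and_arg_eq_iff_mem_openSegment (by simpa using hu) hu hne]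
  refine and_congr_right fun hz => ?_
  rw [poissonArc_eq_of_norm_lt_one (abs_lt.mpr hθ₀) (mem_ball_zero_iff.mp hz), hα, hconj,
    sub_neg_eq_add]
  simp [pi_ne_zero, sub_eq_zero, u]
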